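/- For a random index J on a neighborhood set N with P(J=j) = w_j = ‖x_i − x_j‖ / ∑_{l∈N} ‖x_i − x_l‖ (all x_j ≠ x_i), the importance-sampled consensus gradient c(x_i − x_J)/w_J satisfies E[‖c(x_i − x_J)/w_J − c∑_{j∈N}(x_i − x_j)‖²] = c²[(∑_{j∈N}‖x_i − x_j‖)² − ‖∑_{j∈N}(x_i − x_j)‖²]. -/

import Mathlib

/-!
Sampling `J` with probability `w_j = ‖d_j‖ / S`, where `d_j = x_i - x_j` and `S = ∑ ‖d_j‖`, makes
`V = (c / w_J) • d_J` an unbiased estimate of `c • ∑ d_j`, and its second moment is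
`∑ c² ‖d_j‖² / w_j = c² S²`. The claim is then the identity `E‖V - EV‖² = E‖V‖² - ‖EV‖²`.
-/

open Finset

section ImportanceSampling

variable {ι E : Type*} [Fintype ι] [NormedAddCommGroup E] [InnerProductSpace ℝ E]

theorem sum_mul_norm_sub_sq_of_sum_eq_one {w : ι → ℝ} (hw : ∑ j, w j = 1) (v : ι → E) {m : E}
    (hm : ∑ j, w j • v j = m) :
    ∑ j, w j * ‖v j - m‖ ^ 2 = ∑ j, w j * ‖v j‖ ^ 2 - ‖m‖ ^ 2 := by
  have hcross : ∑ j, w j * inner ℝ (v j) m = ‖m‖ ^ 2 := by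
    simp_rw [← real_inner_smul_left, ← sum_inner, hm, real_inner_self_eq_norm_sq]
  have hconst : ∑ j, w j * ‖m‖ ^ 2 = ‖m‖ ^ 2 := by rw [← sum_mul, hw, one_mul]
  simp_rw [norm_sub_sq_real, mul_add, mul_sub, sum_add_distrib, sum_sub_distrib, hconst,
    mul_left_comm _ (2 : ℝ), ← mul_sum, hcross]
  ring

variable {S : ℝ}

theorem norm_div_smul_div_norm_div_smul (hS : 0 < S) (c : ℝ) (a : E) :
    (‖a‖ / S) • ((c / (‖a‖ / S)) • a) = c • a := by
  rcases eq_or_ne a 0 with rfl | ha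
  · simp
  · rw [smul_smul, mul_div_cancel₀ _ (div_pos (norm_pos_iff.mpr ha) hS).ne']

theorem norm_div_mul_norm_div_smul_sq (hS : 0 < S) (c : ℝ) (a : E) :
    ‖a‖ / S * ‖(c / (‖a‖ / S)) • a‖ ^ 2 = c ^ 2 * S * ‖a‖ := by
  rcases eq_or_ne a 0 with rfl | ha
  · simp
  · have ha' := (norm_pos_iff.mpr ha).ne'
    rw [norm_smul, mul_pow, Real.norm_eq_abs, sq_abs]
    field_simp

theorem sum_norm_weighted_variance (d : ι → E) (c : ℝ) (w : ι → ℝ)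
    (hw : ∀ j, w j = ‖d j‖ / ∑ l, ‖d l‖) :
    ∑ j, w j * ‖(c / w j) • d j - c • ∑ l, d l‖ ^ 2 =
      c ^ 2 * ((∑ j, ‖d j‖) ^ 2 - ‖∑ j, d j‖ ^ 2) := by
  obtain rfl : w = fun j => ‖d j‖ / ∑ l, ‖d l‖ := funext hw
  rcases (sum_nonneg fun j _ => norm_nonneg (d j)).eq_or_lt with hS | hS
  · have hd : ∀ j, d j = 0 := fun j =>
      norm_eq_zero.mp ((sum_eq_zero_iff_of_nonneg fun l _ => norm_nonneg (d l)).mp hS.symm j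
        (mem_univ j))
    simp [hd]
  · have hw1 : ∑ j, ‖d j‖ / ∑ l, ‖d l‖ = 1 := by rw [← sum_div, div_self hS.ne']
    rw [sum_mul_norm_sub_sq_of_sum_eq_one hw1 _ (by
        simp_rw [norm_div_smul_div_norm_div_smul hS, ← smul_sum])]
    simp_rw [norm_div_mul_norm_div_smul_sq hS, ← mul_sum, norm_smul, mul_pow, Real.norm_eq_abs,
      sq_abs]
    ring

end ImportanceSampling

theorem consensus_gradient_variance_general (n M : ℕ)
    (xi : EuclideanSpace ℝ (Fin M)) (x : Fin n → EuclideanSpace ℝ (Fin M))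
    (c : ℝ)
    (w : Fin n → ℝ) (hw : ∀ j, w j = ‖xi - x j‖ / ∑ l, ‖xi - x l‖) :
    ∑ j, w j * ‖(c / w j) • (xi - x j) - c • ∑ l, (xi - x l)‖ ^ 2 =
      c ^ 2 * ((∑ j, ‖xi - x j‖) ^ 2 - ‖∑ j, (xi - x j)‖ ^ 2) :=
  sum_norm_weighted_variance (fun j => xi - x j) c w hw

/-- Theorem 4 of the paper: with sampling probabilities
`w j = ‖x_i − x_j‖ / ∑_l ‖x_i − x_l‖`, the variance of the importance-sampled
consensus gradient `c (x_i − x_J) / w_J` equals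
`c² [(∑_j ‖x_i − x_j‖)² − ‖∑_j (x_i − x_j)‖²]`. -/
theorem consensus_gradient_variance (n M : ℕ)
    (xi : EuclideanSpace ℝ (Fin M)) (x : Fin n → EuclideanSpace ℝ (Fin M))
    (hx : ∀ j, x j ≠ xi) (c : ℝ) (hc : 0 < c)
    (w : Fin n → ℝ) (hw : ∀ j, w j = ‖xi - x j‖ / ∑ l, ‖xi - x l‖) :
    ∑ j, w j * ‖(c / w j) • (xi - x j) - c • ∑ l, (xi - x l)‖ ^ 2 =
      c ^ 2 * ((∑ j, ‖xi - x j‖) ^ 2 - ‖∑ j, (xi - x j)‖ ^ 2) :=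
  consensus_gradient_variance_general n M xi x c w hw
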